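/- Every cycle C_n with n ≡ 0 (mod 4) admits a locally irregular edge coloring with 2 colors. -/

import Mathlib

open Finset SimpleGraph

/-!
Colour an edge of `C_n` with `1` when one of its endpoints is `≡ 3 (mod 4)` and with `0`
otherwise. As `4 ∣ n`, residues mod 4 run consistently around the cycle, so each colour class is
a disjoint union of two-edge paths (centred at the vertices `≡ 1`, resp. `≡ 3`), and a two-edge
path is locally irregular: its centre has degree 2 and its ends degree 1.
-/

/-- Degree of `v` in the color class `k` of the edge coloring `c` of `G`. -/
def degIn {V K : Type*} [Fintype V] (G : SimpleGraph V) [DecidableRel G.Adj] [DecidableEq K]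
    (c : Sym2 V → K) (k : K) (v : V) : ℕ :=
  (Finset.univ.filter fun w => G.Adj v w ∧ c s(v, w) = k).card

/-- `c` is a locally irregular edge coloring of the simple graph `G`. -/
def IsLIC {V K : Type*} [Fintype V] (G : SimpleGraph V) [DecidableRel G.Adj] [DecidableEq K]
    (c : Sym2 V → K) : Prop :=
  ∀ v w, G.Adj v w → degIn G c (c s(v, w)) v ≠ degIn G c (c s(v, w)) w

/-- In the 2-multigraph `²G`, each edge of `G` carries a pair of colors (one for each
parallel copy).  `degIn2 G c k v` is the degree of `v` in the color class `k`. -/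
def degIn2 {V K : Type*} [Fintype V] (G : SimpleGraph V) [DecidableRel G.Adj] [DecidableEq K]
    (c : Sym2 V → K × K) (k : K) (v : V) : ℕ :=
  ∑ w ∈ Finset.univ.filter (fun w => G.Adj v w),
    ((if (c s(v, w)).1 = k then 1 else 0) + (if (c s(v, w)).2 = k then 1 else 0))

/-- `c` is a locally irregular edge coloring of the 2-multigraph `²G`. -/
def IsLIC2 {V K : Type*} [Fintype V] (G : SimpleGraph V) [DecidableRel G.Adj] [DecidableEq K]
    (c : Sym2 V → K × K) : Prop :=
  ∀ v w, G.Adj v w → ∀ k : K, ((c s(v, w)).1 = k ∨ (c s(v, w)).2 = k) →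
    degIn2 G c k v ≠ degIn2 G c k w

instance {n : ℕ} : DecidableRel (SimpleGraph.pathGraph n).Adj := fun _ _ =>
  decidable_of_iff _ (SimpleGraph.pathGraph_adj).symm

lemma Fin.val_add_mod_of_dvd {n d : ℕ} (h : d ∣ n) (a b : Fin n) :
    (a + b).val % d = (a.val + b.val) % d := by
  rw [Fin.val_add, Nat.mod_mod_of_dvd _ h]

lemma degIn_eq_card_filter_neighborFinset {V K : Type*} [Fintype V] (G : SimpleGraph V)
    [DecidableRel G.Adj] [DecidableEq K] (c : Sym2 V → K) (k : K) (v : V) :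
    degIn G c k v = #{w ∈ G.neighborFinset v | c s(v, w) = k} := by
  rw [degIn, neighborFinset_eq_filter, Finset.filter_filter]

lemma degIn_cycleGraph {m : ℕ} {K : Type*} [DecidableEq K] (c : Sym2 (Fin (m + 3)) → K) (k : K)
    (v : Fin (m + 3)) :
    degIn (cycleGraph (m + 3)) c k v =
      (if c s(v, v - 1) = k then 1 else 0) + (if c s(v, v + 1) = k then 1 else 0) := by
  have hne : v - 1 ≠ v + 1 := by
    rw [ne_eq, sub_eq_iff_eq_add, add_assoc, left_eq_add, Fin.ext_iff]
    simp only [Fin.val_add, Fin.val_zero, Fin.val_one', Nat.add_mod_mod, Nat.mod_add_mod]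
    rw [Nat.mod_eq_of_lt (by omega)]
    omega
  rw [degIn_eq_card_filter_neighborFinset, cycleGraph_neighborFinset, Finset.filter_insert,
    Finset.filter_singleton]
  split_ifs <;> simp [hne]

lemma cycleGraph_adj_val_mod {n d : ℕ} (h : d ∣ n) {v w : Fin n} (hadj : (cycleGraph n).Adj v w) :
    w.val % d = (v.val + 1) % d ∨ v.val % d = (w.val + 1) % d := by
  have := NeZero.of_pos v.pos
  rw [cycleGraph_adj'] at hadj
  rcases hadj with hvw | hwv
  · right; rw [← hvw, ← Fin.val_add_mod_of_dvd h, add_sub_cancel]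
  · left; rw [← hwv, ← Fin.val_add_mod_of_dvd h, add_sub_cancel]

def edgeColorMod4 (a b : ℕ) : Fin 2 := if a = 3 ∨ b = 3 then 1 else 0

lemma edgeColorMod4_comm (a b : ℕ) : edgeColorMod4 a b = edgeColorMod4 b a := by
  simp only [edgeColorMod4, or_comm]

def cycleColoring (n : ℕ) : Sym2 (Fin n) → Fin 2 :=
  Sym2.lift ⟨fun v w => edgeColorMod4 (v.val % 4) (w.val % 4), fun _ _ => edgeColorMod4_comm _ _⟩

lemma cycleColoring_mk {n : ℕ} (v w : Fin n) :
    cycleColoring n s(v, w) = edgeColorMod4 (v.val % 4) (w.val % 4) := rfl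

def degMod4 (r : ℕ) (k : Fin 2) : ℕ :=
  (if edgeColorMod4 r ((r + 3) % 4) = k then 1 else 0) +
    (if edgeColorMod4 r ((r + 1) % 4) = k then 1 else 0)

lemma degIn_cycleColoring {m : ℕ} (h : 4 ∣ m + 3) (k : Fin 2) (v : Fin (m + 3)) :
    degIn (cycleGraph (m + 3)) (cycleColoring (m + 3)) k v = degMod4 (v.val % 4) k := by
  have hsucc : (v + 1).val % 4 = (v.val % 4 + 1) % 4 := by
    rw [Fin.val_add_mod_of_dvd h, Fin.val_one', Nat.mod_eq_of_lt (by omega : 1 < m + 3),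
      Nat.mod_add_mod]
  have hpred : (v - 1).val % 4 = (v.val % 4 + 3) % 4 := by
    have := Fin.val_add_mod_of_dvd h (v - 1) 1
    rw [sub_add_cancel, Fin.val_one', Nat.mod_eq_of_lt (by omega : 1 < m + 3)] at this
    omega
  rw [degIn_cycleGraph, degMod4, cycleColoring_mk, cycleColoring_mk, hsucc, hpred]

lemma degMod4_ne_of_adj {r s : ℕ} (hr : r < 4) (hs : s < 4)
    (hrs : s = (r + 1) % 4 ∨ r = (s + 1) % 4) :
    degMod4 r (edgeColorMod4 r s) ≠ degMod4 s (edgeColorMod4 r s) := by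
  interval_cases r <;> interval_cases s <;> revert hrs <;> decide

theorem isLIC_cycleColoring {n : ℕ} (h : 4 ∣ n) : IsLIC (cycleGraph n) (cycleColoring n) := by
  intro v w hadj
  obtain ⟨m, rfl⟩ : ∃ m, n = m + 3 := ⟨n - 3, by have := v.pos; omega⟩
  rw [cycleColoring_mk, degIn_cycleColoring h, degIn_cycleColoring h]
  exact degMod4_ne_of_adj (Nat.mod_lt _ (by norm_num)) (Nat.mod_lt _ (by norm_num))
    (by simpa [Nat.add_mod] using cycleGraph_adj_val_mod h hadj)

theorem stmt_6_general (n : ℕ) (h4 : n % 4 = 0) :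
    ∃ c : Sym2 (Fin n) → Fin 2, IsLIC (cycleGraph n) c :=
  ⟨cycleColoring n, isLIC_cycleColoring (Nat.dvd_of_mod_eq_zero h4)⟩

/-- Every cycle `C_n` with `n ≡ 0 (mod 4)` admits a locally irregular 2-edge-coloring. -/
theorem stmt_6 (n : ℕ) (hn : 3 ≤ n) (h4 : n % 4 = 0) :
    ∃ c : Sym2 (Fin n) → Fin 2, IsLIC (cycleGraph n) c :=
  stmt_6_general n h4
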